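/- Let θ₁, θ₂ ∈ 𝕋 with ε_θ := d(θ₁,θ₂), ω₁, ω₂ ∈ ℝ with ε_ω := |ω₁-ω₂|, and set μ = (1/2)(δ_{(θ₁,ω₁)} + δ_{(θ₂,ω₂)}) and ν = (1/2)(δ_{(θ₂,ω₁)} + δ_{(θ₁,ω₂)}), both with ω-marginal g = (1/2)(δ_{ω₁}+δ_{ω₂}). Then W_{2,g}(μ,ν)² = ε_θ² while SW₂(μ,ν)² = min{ε_θ², ε_ω²/K²}; in particular SW₂(μ,ν) < W_{2,g}(μ,ν) whenever ε_ω/K < ε_θ. -/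

import Mathlib

open MeasureTheory

/-- The circle `𝕋 = ℝ/2πℤ`. -/
abbrev Torus : Type := AddCircle (2 * Real.pi)

/-- The quadratic Wasserstein "distance" associated with a cost function `d`. -/
noncomputable def wassersteinTwo {X : Type*} [MeasurableSpace X]
    (d : X → X → ℝ) (μ ν : Measure X) : ℝ :=
  sInf {c : ℝ | ∃ γ : Measure (X × X),
    γ.map Prod.fst = μ ∧ γ.map Prod.snd = ν ∧
    c = (∫ q, d q.1 q.2 ^ 2 ∂γ) ^ ((1 : ℝ) / 2)}

/-- The scaled Riemannian distance `d_K` on `𝕋 × ℝ`. -/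
noncomputable def scaledDist (K : ℝ) (p q : Torus × ℝ) : ℝ :=
  Real.sqrt (dist p.1 q.1 ^ 2 + (p.2 - q.2) ^ 2 / K ^ 2)

lemma aux_integrable_dirac {X : Type*} [MeasurableSpace X] [MeasurableSingletonClass X]
    (f : X → ℝ) (a : X) : Integrable f (Measure.dirac a) := by
  have hae : (fun _ : X => f a) =ᵐ[Measure.dirac a] f := by
    rw [Filter.EventuallyEq, MeasureTheory.ae_dirac_eq]
    exact Filter.eventually_pure.2 rfl
  exact (integrable_const (f a)).congr hae

lemma aux_coupling_ae {X Y : Type*} [MeasurableSpace X] [MeasurableSpace Y]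
    {γ : Measure (X × Y)} {μ0 : Measure X} {ν0 : Measure Y}
    (h1 : γ.map Prod.fst = μ0) (h2 : γ.map Prod.snd = ν0)
    {s : Set X} {t : Set Y} (hs : MeasurableSet s) (ht : MeasurableSet t)
    (hμs : μ0 sᶜ = 0) (hνt : ν0 tᶜ = 0) : ∀ᵐ q ∂γ, q.1 ∈ s ∧ q.2 ∈ t := by
  have hfs : γ (Prod.fst ⁻¹' sᶜ) = 0 := by
    rw [← Measure.map_apply measurable_fst hs.compl, h1]; exact hμs
  have hft : γ (Prod.snd ⁻¹' tᶜ) = 0 := by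
    rw [← Measure.map_apply measurable_snd ht.compl, h2]; exact hνt
  have : γ ((Prod.fst ⁻¹' sᶜ) ∪ (Prod.snd ⁻¹' tᶜ)) = 0 :=
    measure_union_null hfs hft
  refine (measure_mono_null ?_ this : γ {q | ¬(q.1 ∈ s ∧ q.2 ∈ t)} = 0)
  intro q hq
  by_cases h : q.1 ∈ s
  · exact Or.inr (fun h2' => hq ⟨h, h2'⟩)
  · exact Or.inl h

lemma aux_coupling_mass {X Y : Type*} [MeasurableSpace X] [MeasurableSpace Y]
    {γ : Measure (X × Y)} {μ0 : Measure X}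
    (h1 : γ.map Prod.fst = μ0) : γ Set.univ = μ0 Set.univ := by
  rw [← h1, Measure.map_apply measurable_fst MeasurableSet.univ, Set.preimage_univ]

lemma aux_wass_dirac {X : Type*} [MeasurableSpace X] [PseudoMetricSpace X]
    [MeasurableSingletonClass X] (a b : X) :
    wassersteinTwo dist (Measure.dirac a) (Measure.dirac b) = dist a b := by
  have hset : {c : ℝ | ∃ γ : Measure (X × X),
      γ.map Prod.fst = Measure.dirac a ∧ γ.map Prod.snd = Measure.dirac b ∧
      c = (∫ q, dist q.1 q.2 ^ 2 ∂γ) ^ ((1 : ℝ) / 2)} = {dist a b} := by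
    ext c
    simp only [Set.mem_setOf_eq, Set.mem_singleton_iff]
    constructor
    · rintro ⟨γ, h1, h2, rfl⟩
      have huniv : γ Set.univ = 1 := by
        rw [aux_coupling_mass h1]; simp
      have hae : ∀ᵐ q ∂γ, q.1 ∈ ({a} : Set X) ∧ q.2 ∈ ({b} : Set X) := by
        refine aux_coupling_ae h1 h2 (measurableSet_singleton a)
          (measurableSet_singleton b) ?_ ?_ <;> simp
      have hInt : (∫ q, dist q.1 q.2 ^ 2 ∂γ) = dist a b ^ 2 := by
        rw [integral_congr_ae (g := fun _ => dist a b ^ 2)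
          (hae.mono fun q hq => by
            simp only [Set.mem_singleton_iff] at hq
            rw [hq.1, hq.2])]
        rw [integral_const, measureReal_def, huniv]; simp
      rw [hInt, ← Real.sqrt_eq_rpow, Real.sqrt_sq dist_nonneg]
    · rintro rfl
      refine ⟨Measure.dirac (a, b), by rw [Measure.map_dirac' measurable_fst],
        by rw [Measure.map_dirac' measurable_snd], ?_⟩
      rw [integral_dirac, ← Real.sqrt_eq_rpow, Real.sqrt_sq dist_nonneg]
  rw [wassersteinTwo, hset, csInf_singleton]

instance : MeasurableSingletonClass ((Torus × ℝ) × Torus × ℝ) :=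
  @Prod.instMeasurableSingletonClass _ _ _ _ inferInstance inferInstance

/-- For the two-point empirical measures `μ = ½(δ_{(θ₁,ω₁)} + δ_{(θ₂,ω₂)})` and
`ν = ½(δ_{(θ₂,ω₁)} + δ_{(θ₁,ω₂)})` with common `ω`-marginal `g = ½(δ_{ω₁}+δ_{ω₂})`,
the fibered distance satisfies `W_{2,g}(μ,ν)² = ε_θ²` while
`SW₂(μ,ν)² = min(ε_θ², ε_ω²/K²)`; in particular `SW₂ < W_{2,g}` when `ε_ω/K < ε_θ`. -/
theorem fibered_vs_scaled_wasserstein_example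
    (K : ℝ) (hK : 0 < K)
    (θ1 θ2 : Torus) (hθ : θ1 ≠ θ2) (ω1 ω2 : ℝ) (hω : ω1 ≠ ω2)
    (εθ εω : ℝ) (hεθ : εθ = dist θ1 θ2) (hεω : εω = |ω1 - ω2|)
    (μ ν : Measure (Torus × ℝ)) (g : Measure ℝ)
    (hμ : μ = (2 : ENNReal)⁻¹ • (Measure.dirac (θ1, ω1) + Measure.dirac (θ2, ω2)))
    (hν : ν = (2 : ENNReal)⁻¹ • (Measure.dirac (θ2, ω1) + Measure.dirac (θ1, ω2)))
    (hg : g = (2 : ENNReal)⁻¹ • (Measure.dirac ω1 + Measure.dirac ω2))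
    (κμ κν : ℝ → Measure Torus)
    (hκμ : κμ = fun ω => if ω = ω1 then Measure.dirac θ1 else Measure.dirac θ2)
    (hκν : κν = fun ω => if ω = ω1 then Measure.dirac θ2 else Measure.dirac θ1) :
    (∫ ω, wassersteinTwo dist (κμ ω) (κν ω) ^ 2 ∂g) = εθ ^ 2 ∧
    wassersteinTwo (scaledDist K) μ ν ^ 2 = min (εθ ^ 2) (εω ^ 2 / K ^ 2) ∧
    (εω / K < εθ →
      wassersteinTwo (scaledDist K) μ ν
        < Real.sqrt (∫ ω, wassersteinTwo dist (κμ ω) (κν ω) ^ 2 ∂g)) := by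
  have hεθ0 : 0 ≤ εθ := hεθ ▸ dist_nonneg
  have hεω0 : 0 ≤ εω := hεω ▸ abs_nonneg _
  -- Part 1
  have hguniv : g Set.univ = 1 := by
    rw [hg]; simp [Measure.smul_apply, Measure.add_apply]
    exact ENNReal.inv_two_add_inv_two
  have hWconst : ∀ ω : ℝ, wassersteinTwo dist (κμ ω) (κν ω) = εθ := by
    intro ω
    by_cases h : ω = ω1 <;>
      simp [hκμ, hκν, h, aux_wass_dirac, hεθ, dist_comm]
  have hpart1 : (∫ ω, wassersteinTwo dist (κμ ω) (κν ω) ^ 2 ∂g) = εθ ^ 2 := by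
    have heq : (fun ω => wassersteinTwo dist (κμ ω) (κν ω) ^ 2) = fun _ => εθ ^ 2 := by
      funext ω; rw [hWconst ω]
    rw [heq, integral_const, measureReal_def, hguniv]; simp
  -- Part 2 setup
  set A : Torus × ℝ := (θ1, ω1) with hA
  set B : Torus × ℝ := (θ2, ω2) with hB
  set C : Torus × ℝ := (θ2, ω1) with hC
  set D : Torus × ℝ := (θ1, ω2) with hD
  set m : ℝ := min (εθ ^ 2) (εω ^ 2 / K ^ 2) with hm
  set m' : ℝ := min εθ (εω / K) with hm'
  have hm'0 : 0 ≤ m' := le_min hεθ0 (div_nonneg hεω0 hK.le)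
  have hdivpow : εω ^ 2 / K ^ 2 = (εω / K) ^ 2 := (div_pow εω K 2).symm
  have hmm' : m = m' ^ 2 := by
    rcases le_total εθ (εω / K) with h | h
    · rw [hm, hm', min_eq_left h, min_eq_left]
      rw [hdivpow]; exact pow_le_pow_left₀ hεθ0 h 2
    · rw [hm, hm', min_eq_right h, min_eq_right, hdivpow]
      rw [hdivpow]; exact pow_le_pow_left₀ (div_nonneg hεω0 hK.le) h 2
  have hcost : ∀ p q : Torus × ℝ,
      scaledDist K p q ^ 2 = dist p.1 q.1 ^ 2 + (p.2 - q.2) ^ 2 / K ^ 2 := by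
    intro p q
    rw [scaledDist, Real.sq_sqrt]
    positivity
  have hAC : scaledDist K A C ^ 2 = εθ ^ 2 := by
    rw [hcost]
    show dist θ1 θ2 ^ 2 + (ω1 - ω1) ^ 2 / K ^ 2 = εθ ^ 2
    rw [hεθ]; ring
  have hBD : scaledDist K B D ^ 2 = εθ ^ 2 := by
    rw [hcost]
    show dist θ2 θ1 ^ 2 + (ω2 - ω2) ^ 2 / K ^ 2 = εθ ^ 2
    rw [dist_comm, hεθ]; ring
  have hAD : scaledDist K A D ^ 2 = εω ^ 2 / K ^ 2 := by
    rw [hcost]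
    show dist θ1 θ1 ^ 2 + (ω1 - ω2) ^ 2 / K ^ 2 = εω ^ 2 / K ^ 2
    rw [dist_self, hεω, sq_abs]; ring
  have hBC : scaledDist K B C ^ 2 = εω ^ 2 / K ^ 2 := by
    rw [hcost]
    show dist θ2 θ2 ^ 2 + (ω2 - ω1) ^ 2 / K ^ 2 = εω ^ 2 / K ^ 2
    rw [dist_self, hεω, sq_abs]; ring
  set S : Set ℝ := {c : ℝ | ∃ γ : Measure ((Torus × ℝ) × (Torus × ℝ)),
    γ.map Prod.fst = μ ∧ γ.map Prod.snd = ν ∧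
    c = (∫ q, scaledDist K q.1 q.2 ^ 2 ∂γ) ^ ((1 : ℝ) / 2)} with hS
  have hWS : wassersteinTwo (scaledDist K) μ ν = sInf S := rfl
  have hint : ∀ p q : (Torus × ℝ) × (Torus × ℝ),
      (∫ x, scaledDist K x.1 x.2 ^ 2
          ∂((2 : ENNReal)⁻¹ • (Measure.dirac p + Measure.dirac q)))
      = (scaledDist K p.1 p.2 ^ 2 + scaledDist K q.1 q.2 ^ 2) / 2 := by
    intro p q
    rw [integral_smul_measure,
      integral_add_measure (aux_integrable_dirac _ _) (aux_integrable_dirac _ _),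
      integral_dirac, integral_dirac]
    simp [ENNReal.toReal_inv]
    ring
  have hmem1 : εθ ∈ S := by
    refine ⟨(2 : ENNReal)⁻¹ • (Measure.dirac (A, C) + Measure.dirac (B, D)), ?_, ?_, ?_⟩
    · rw [Measure.map_smul, Measure.map_add _ _ measurable_fst,
        Measure.map_dirac' measurable_fst, Measure.map_dirac' measurable_fst, hμ]
    · rw [Measure.map_smul, Measure.map_add _ _ measurable_snd,
        Measure.map_dirac' measurable_snd, Measure.map_dirac' measurable_snd, hν]
    · rw [hint, hAC, hBD, show (εθ ^ 2 + εθ ^ 2) / 2 = εθ ^ 2 by ring,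
        ← Real.sqrt_eq_rpow, Real.sqrt_sq hεθ0]
  have hmem2 : εω / K ∈ S := by
    refine ⟨(2 : ENNReal)⁻¹ • (Measure.dirac (A, D) + Measure.dirac (B, C)), ?_, ?_, ?_⟩
    · rw [Measure.map_smul, Measure.map_add _ _ measurable_fst,
        Measure.map_dirac' measurable_fst, Measure.map_dirac' measurable_fst, hμ]
    · rw [Measure.map_smul, Measure.map_add _ _ measurable_snd,
        Measure.map_dirac' measurable_snd, Measure.map_dirac' measurable_snd, hν]
      exact congrArg _ (add_comm _ _)
    · rw [hint, hAD, hBC,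
        show (εω ^ 2 / K ^ 2 + εω ^ 2 / K ^ 2) / 2 = εω ^ 2 / K ^ 2 by ring,
        hdivpow, ← Real.sqrt_eq_rpow, Real.sqrt_sq (div_nonneg hεω0 hK.le)]
  have hcont : Continuous fun q : (Torus × ℝ) × (Torus × ℝ) => scaledDist K q.1 q.2 ^ 2 := by
    have heq : (fun q : (Torus × ℝ) × (Torus × ℝ) => scaledDist K q.1 q.2 ^ 2)
        = fun q => dist q.1.1 q.2.1 ^ 2 + (q.1.2 - q.2.2) ^ 2 / K ^ 2 :=
      funext fun q => hcost _ _
    rw [heq]; fun_prop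
  set M : ℝ := max (εθ ^ 2) (εω ^ 2 / K ^ 2) with hM
  have hM0 : 0 ≤ M := le_max_of_le_left (sq_nonneg _)
  have hlb : ∀ c ∈ S, m' ≤ c := by
    rintro c ⟨γ, h1, h2, rfl⟩
    have huniv : γ Set.univ = 1 := by
      rw [aux_coupling_mass h1, hμ]
      simp [Measure.smul_apply, Measure.add_apply]
      exact ENNReal.inv_two_add_inv_two
    have hγfin : IsFiniteMeasure γ := ⟨by rw [huniv]; exact ENNReal.one_lt_top⟩
    have hae : ∀ᵐ q ∂γ, q.1 ∈ ({A, B} : Set (Torus × ℝ)) ∧ q.2 ∈ ({C, D} : Set (Torus × ℝ)) := by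
      refine aux_coupling_ae h1 h2
        ((measurableSet_singleton B).insert A) ((measurableSet_singleton D).insert C) ?_ ?_
      · rw [hμ]; simp [Measure.smul_apply, Measure.add_apply, Measure.dirac_apply]
      · rw [hν]; simp [Measure.smul_apply, Measure.add_apply, Measure.dirac_apply]
    set T : Set ((Torus × ℝ) × (Torus × ℝ)) := {(A, C), (A, D), (B, C), (B, D)} with hT
    have hTmeas : MeasurableSet T := (Set.toFinite T).measurableSet
    have haeT : ∀ᵐ q ∂γ, q ∈ T := by
      refine hae.mono ?_
      rintro ⟨x, y⟩ ⟨hx, hy⟩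
      simp only [Set.mem_insert_iff, Set.mem_singleton_iff] at hx hy
      rcases hx with rfl | rfl <;> rcases hy with rfl | rfl <;> simp [hT]
    have hTc : γ Tᶜ = 0 := ae_iff.mp haeT
    have hfT : ∀ q ∈ T, m ≤ scaledDist K q.1 q.2 ^ 2 ∧ scaledDist K q.1 q.2 ^ 2 ≤ M := by
      intro q hq
      simp only [hT, Set.mem_insert_iff, Set.mem_singleton_iff] at hq
      rcases hq with rfl | rfl | rfl | rfl <;>
        simp only [hAC, hAD, hBC, hBD] <;>
        exact ⟨by first | exact min_le_left _ _ | exact min_le_right _ _,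
               by first | exact le_max_left _ _ | exact le_max_right _ _⟩
    have hIndInt : Integrable (T.indicator fun q => scaledDist K q.1 q.2 ^ 2) γ := by
      refine Integrable.mono' (integrable_const M)
        ((hcont.stronglyMeasurable.indicator hTmeas).aestronglyMeasurable)
        (Filter.Eventually.of_forall fun q => ?_)
      rw [Real.norm_eq_abs, abs_of_nonneg (Set.indicator_nonneg (fun x _ => sq_nonneg _) q)]
      by_cases hq : q ∈ T
      · rw [Set.indicator_of_mem hq]; exact (hfT q hq).2
      · rw [Set.indicator_of_notMem hq]; exact hM0
    have hIeq : (∫ q, scaledDist K q.1 q.2 ^ 2 ∂γ)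
        = ∫ q, T.indicator (fun q => scaledDist K q.1 q.2 ^ 2) q ∂γ := by
      exact integral_congr_ae (haeT.mono fun q hq => by rw [Set.indicator_of_mem hq])
    have hTfull : γ T = 1 := by
      have h := measure_add_measure_compl (μ := γ) hTmeas
      rw [hTc, add_zero, huniv] at h
      exact h
    have hIlb : m ≤ ∫ q, scaledDist K q.1 q.2 ^ 2 ∂γ := by
      rw [hIeq]
      have hconstint : (∫ q, T.indicator (fun _ => m) q ∂γ) = m := by
        rw [integral_indicator_const _ hTmeas, measureReal_def, hTfull]; simp
      rw [← hconstint]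
      refine integral_mono_ae ((integrable_const m).indicator hTmeas) hIndInt
        (Filter.Eventually.of_forall fun q => ?_)
      by_cases hq : q ∈ T
      · rw [Set.indicator_of_mem hq, Set.indicator_of_mem hq]; exact (hfT q hq).1
      · rw [Set.indicator_of_notMem hq, Set.indicator_of_notMem hq]
    calc m' = Real.sqrt m := by rw [hmm', Real.sqrt_sq hm'0]
      _ ≤ Real.sqrt (∫ q, scaledDist K q.1 q.2 ^ 2 ∂γ) := Real.sqrt_le_sqrt hIlb
      _ = (∫ q, scaledDist K q.1 q.2 ^ 2 ∂γ) ^ ((1 : ℝ) / 2) := Real.sqrt_eq_rpow _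
  have hSW : wassersteinTwo (scaledDist K) μ ν = m' := by
    rw [hWS]
    refine le_antisymm ?_ (le_csInf ⟨εθ, hmem1⟩ hlb)
    rcases le_total εθ (εω / K) with h | h
    · rw [hm', min_eq_left h]; exact csInf_le ⟨m', hlb⟩ hmem1
    · rw [hm', min_eq_right h]; exact csInf_le ⟨m', hlb⟩ hmem2
  refine ⟨hpart1, by rw [hSW, ← hmm'], fun hlt => ?_⟩
  rw [hSW, hpart1, Real.sqrt_sq hεθ0, hm']
  exact lt_of_le_of_lt (min_le_right _ _) hlt
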